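/- (Corollary 1, exponential convergence of the static-gain distributed algorithm.) Let x : ℝ → (Fin N → X) satisfy, for every t ≥ 0, HasDerivAt x (−𝒜 (x t)) t. Then there exists α > 0, depending only on ε, ι, λ₂, κ, and N, such that for all t ≥ 0, ‖x t − ψ̃‖ ≤ Real.exp (−α * t) * ‖x 0 − ψ̃‖ (with the L² product norm on Fin N → X); hence all players' estimated strategies converge exponentially to the Nash equilibrium x*. -/

import Mathlib

noncomputable section

open Filter

/-- `gradi J i x` is the gradient, at `x i`, of the map `y ↦ J i (Function.update x i y)`,
i.e. player `i`'s partial gradient of its own cost with respect to its own action. -/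
def gradi {N : ℕ} {d : Fin N → ℕ}
    (J : ∀ _ : Fin N, (PiLp 2 fun i => EuclideanSpace ℝ (Fin (d i))) → ℝ)
    (i : Fin N) (x : PiLp 2 fun i => EuclideanSpace ℝ (Fin (d i))) :
    EuclideanSpace ℝ (Fin (d i)) :=
  gradient (fun y => J i (WithLp.toLp 2 (Function.update x i y))) (x i)

/-- The pseudo-gradient `F`. -/
def Fmap {N : ℕ} {d : Fin N → ℕ}
    (J : ∀ _ : Fin N, (PiLp 2 fun i => EuclideanSpace ℝ (Fin (d i))) → ℝ)
    (x : PiLp 2 fun i => EuclideanSpace ℝ (Fin (d i))) :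
    PiLp 2 fun i => EuclideanSpace ℝ (Fin (d i)) :=
  WithLp.toLp 2 fun i => gradi J i x

/-- The extended pseudo-gradient `F̃`. -/
def Ftil {N : ℕ} {d : Fin N → ℕ}
    (J : ∀ _ : Fin N, (PiLp 2 fun i => EuclideanSpace ℝ (Fin (d i))) → ℝ)
    (ψ : Fin N → PiLp 2 fun i => EuclideanSpace ℝ (Fin (d i))) :
    PiLp 2 fun i => EuclideanSpace ℝ (Fin (d i)) :=
  WithLp.toLp 2 fun i => gradi J i (ψ i)

/-- The augmented game map `𝒜`. -/
def Amap {N : ℕ} {d : Fin N → ℕ}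
    (J : ∀ _ : Fin N, (PiLp 2 fun i => EuclideanSpace ℝ (Fin (d i))) → ℝ)
    (G : SimpleGraph (Fin N)) [DecidableRel G.Adj] (κ : ℝ)
    (ψ : PiLp 2 fun _ : Fin N => PiLp 2 fun i => EuclideanSpace ℝ (Fin (d i))) :
    PiLp 2 fun _ : Fin N => PiLp 2 fun i => EuclideanSpace ℝ (Fin (d i)) :=
  WithLp.toLp 2 fun i => (show PiLp 2 (fun i => EuclideanSpace ℝ (Fin (d i))) from
      WithLp.toLp 2 (Function.update (0 : PiLp 2 fun i => EuclideanSpace ℝ (Fin (d i))) i (Ftil J ψ i)))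
    + κ • ∑ j, SimpleGraph.lapMatrix ℝ G i j • ψ j

/-!
The estimates converge because `𝒜` is strongly monotone around the consensus point
`ψ̃ = 1 ⊗ x*`. Write `ψ - ψ̃ = 1 ⊗ m + w` with `∑ w = 0`. The Laplacian term contributes at least
`κ λ₂ ‖w‖²`. Comparing `F̃ ψ` with `F (x* + m)`, strong monotonicity and the Lipschitz bounds
give at least `ε ‖m‖² - 2 ι ‖m‖ ‖w‖ - ι ‖w‖²` from the pseudo-gradient term. The gain condition
is exactly positive definiteness of the resulting quadratic form
`ε a² - 2 ι a b + (κ λ₂ - ι) b²`, whence `⟪ψ - ψ̃, 𝒜 ψ⟫ ≥ α ‖ψ - ψ̃‖²`; along the flow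
`e^{2 α t} ‖x t - ψ̃‖²` is therefore nonincreasing.
-/

open scoped InnerProductSpace

theorem norm_sub_le_exp_mul_of_hasDerivAt_neg {E : Type*} [NormedAddCommGroup E]
    [InnerProductSpace ℝ E] {f : E → E} {p : E} {α : ℝ}
    (hf : ∀ y, α * ‖y - p‖ ^ 2 ≤ ⟪y - p, f y⟫_ℝ)
    {x : ℝ → E} (hx : ∀ t, 0 ≤ t → HasDerivAt x (-f (x t)) t) {t : ℝ} (ht : 0 ≤ t) :
    ‖x t - p‖ ≤ Real.exp (-α * t) * ‖x 0 - p‖ := by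
  set V : ℝ → ℝ := fun t => Real.exp (2 * α * t) * ‖x t - p‖ ^ 2 with hVdef
  have hV : ∀ s, 0 ≤ s → HasDerivAt V
      (Real.exp (2 * α * s) * (2 * (α * ‖x s - p‖ ^ 2 - ⟪x s - p, f (x s)⟫_ℝ))) s := by
    intro s hs
    refine ((((hasDerivAt_id' s).const_mul (2 * α)).exp).mul
      ((hx s hs).sub_const p).norm_sq).congr_deriv ?_
    simp only [inner_neg_right]
    ring
  have hanti : AntitoneOn V (Set.Ici 0) := by
    refine antitoneOn_of_deriv_nonpos (convex_Ici 0)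
      (fun s hs => (hV s hs).continuousAt.continuousWithinAt) (fun s hs => ?_) (fun s hs => ?_)
      <;> rw [interior_Ici] at hs
    · exact (hV s hs.le).differentiableAt.differentiableWithinAt
    · rw [(hV s hs.le).deriv]
      exact mul_nonpos_of_nonneg_of_nonpos (Real.exp_pos _).le (by linarith [hf (x s)])
  have hVt : Real.exp (2 * α * t) * ‖x t - p‖ ^ 2 ≤ ‖x 0 - p‖ ^ 2 := by
    simpa [hVdef] using hanti Set.self_mem_Ici ht ht
  have hexp : Real.exp (-α * t) ^ 2 * Real.exp (2 * α * t) = 1 := by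
    rw [sq, ← Real.exp_add, ← Real.exp_add, ← Real.exp_zero]
    ring_nf
  refine (pow_le_pow_iff_left₀ (norm_nonneg _) (by positivity) two_ne_zero).mp ?_
  calc ‖x t - p‖ ^ 2 = Real.exp (-α * t) ^ 2 * (Real.exp (2 * α * t) * ‖x t - p‖ ^ 2) := by
        rw [← mul_assoc, hexp, one_mul]
    _ ≤ Real.exp (-α * t) ^ 2 * ‖x 0 - p‖ ^ 2 := by gcongr
    _ = (Real.exp (-α * t) * ‖x 0 - p‖) ^ 2 := (mul_pow _ _ _).symm

theorem sq_lt_mul_sub_of_gt_div {ε ι lam κ : ℝ} (hε : 0 < ε) (hlam : 0 < lam)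
    (hκ : κ > (ι ^ 2 / ε + ι) / lam) : ι ^ 2 < ε * (κ * lam - ι) := by
  have h := (div_lt_iff₀ hlam).mp hκ
  have : ι ^ 2 / ε < κ * lam - ι := by linarith
  rwa [div_lt_iff₀' hε] at this

theorem pos_of_sq_lt_mul {ε ι c : ℝ} (hε : 0 < ε) (hc : ι ^ 2 < ε * c) : 0 < c :=
  pos_of_mul_pos_right ((sq_nonneg ι).trans_lt hc) hε.le

theorem det_div_trace_pos {ε ι c : ℝ} (hε : 0 < ε) (hc : ι ^ 2 < ε * c) :
    0 < (ε * c - ι ^ 2) / (ε + c) :=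
  div_pos (by linarith) (by linarith [pos_of_sq_lt_mul hε hc])

/-- `det / trace` of `[[ε, -ι], [-ι, c]]` bounds its smaller eigenvalue from below. -/
theorem det_div_trace_mul_le_quadratic {ε ι c : ℝ} (hε : 0 < ε) (hc : ι ^ 2 < ε * c) (a b : ℝ) :
    (ε * c - ι ^ 2) / (ε + c) * (a ^ 2 + b ^ 2) ≤ ε * a ^ 2 - 2 * ι * a * b + c * b ^ 2 := by
  have hc0 := pos_of_sq_lt_mul hε hc
  rw [div_mul_eq_mul_div, div_le_iff₀ (by positivity)]
  have key : (ε ^ 2 + ι ^ 2) * ((ε * a ^ 2 - 2 * ι * a * b + c * b ^ 2) * (ε + c)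
      - (ε * c - ι ^ 2) * (a ^ 2 + b ^ 2))
      = ((ε ^ 2 + ι ^ 2) * a - (ε + c) * ι * b) ^ 2 + ((ε * c - ι ^ 2) * b) ^ 2 := by ring
  have : 0 ≤ (ε * a ^ 2 - 2 * ι * a * b + c * b ^ 2) * (ε + c)
      - (ε * c - ι ^ 2) * (a ^ 2 + b ^ 2) :=
    nonneg_of_mul_nonneg_right (by rw [key]; positivity) (by positivity)
  linarith

/-- `det / trace` of `[[ε, -ι], [-ι, κ lam₂ - ι]]`, divided by `N`. -/
def gainRate (ε ι lam₂ κ : ℝ) (N : ℕ) : ℝ :=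
  (ε * (κ * lam₂ - ι) - ι ^ 2) / (ε + (κ * lam₂ - ι)) / N

theorem gainRate_pos {ε ι lam₂ κ : ℝ} {N : ℕ} (hN : 1 ≤ N) (hε : 0 < ε) (hlam₂ : 0 < lam₂)
    (hκgain : κ > (ι ^ 2 / ε + ι) / lam₂) : 0 < gainRate ε ι lam₂ κ N :=
  div_pos (det_div_trace_pos hε (sq_lt_mul_sub_of_gt_div hε hlam₂ hκgain)) (by exact_mod_cast hN)

theorem sum_sub_average_eq_zero {ι E : Type*} [Fintype ι] [AddCommGroup E] [Module ℝ E]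
    (v : ι → E) : ∑ i, (v i - (Fintype.card ι : ℝ)⁻¹ • ∑ j, v j) = 0 := by
  rcases isEmpty_or_nonempty ι with hι | hι
  · simp
  rw [Finset.sum_sub_distrib, Finset.sum_const, Finset.card_univ, ← Nat.cast_smul_eq_nsmul ℝ,
    smul_smul, mul_inv_cancel₀ (by simp), one_smul, sub_self]

theorem sum_norm_add_sq_of_sum_eq_zero {ι E : Type*} [Fintype ι] [NormedAddCommGroup E]
    [InnerProductSpace ℝ E] (m : E) {w : ι → E} (hw : ∑ i, w i = 0) :
    ∑ i, ‖m + w i‖ ^ 2 = Fintype.card ι * ‖m‖ ^ 2 + ∑ i, ‖w i‖ ^ 2 := by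
  simp only [norm_add_sq_real, Finset.sum_add_distrib, ← Finset.mul_sum, ← inner_sum, hw,
    inner_zero_right, mul_zero, add_zero, Finset.sum_const, Finset.card_univ, nsmul_eq_mul]

theorem sum_sum_mul_inner_add_add {ι E : Type*} [Fintype ι] [NormedAddCommGroup E]
    [InnerProductSpace ℝ E] {L : Matrix ι ι ℝ} (hrow : ∀ i, ∑ j, L i j = 0)
    (hcol : ∀ j, ∑ i, L i j = 0) (p q : E) (u v : ι → E) :
    ∑ i, ∑ j, L i j * ⟪p + u i, q + v j⟫_ℝ = ∑ i, ∑ j, L i j * ⟪u i, v j⟫_ℝ := by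
  have hp : ∑ i, ∑ j, L i j * ⟪p, q + v j⟫_ℝ = 0 := by
    rw [Finset.sum_comm]
    simp only [← Finset.sum_mul, hcol, zero_mul, Finset.sum_const_zero]
  have hq : ∑ i, ∑ j, L i j * ⟪u i, q⟫_ℝ = 0 := by
    simp only [← Finset.sum_mul, hrow, zero_mul, Finset.sum_const_zero]
  simp only [inner_add_left, inner_add_right, mul_add, Finset.sum_add_distrib] at hp ⊢
  linarith

theorem SimpleGraph.sum_lapMatrix_row {V R : Type*} [Fintype V] [DecidableEq V] [NonAssocRing R]
    (G : SimpleGraph V) [DecidableRel G.Adj] (i : V) : ∑ j, G.lapMatrix R i j = 0 := by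
  simpa [Matrix.mulVec, dotProduct] using congrFun (G.lapMatrix_mulVec_const_eq_zero (R := R)) i

theorem SimpleGraph.sum_lapMatrix_col {V R : Type*} [Fintype V] [DecidableEq V] [NonAssocRing R]
    (G : SimpleGraph V) [DecidableRel G.Adj] (j : V) : ∑ i, G.lapMatrix R i j = 0 := by
  simpa only [(G.isSymm_lapMatrix R).apply j] using G.sum_lapMatrix_row j

section Blocks

variable {ι : Type*} [Fintype ι] {E : ι → Type*} [∀ i, NormedAddCommGroup (E i)]

def diagBlocks (ψ : ι → PiLp 2 E) : PiLp 2 E := WithLp.toLp 2 fun k => ψ k k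

theorem norm_diagBlocks_le (ψ : PiLp 2 fun _ : ι => PiLp 2 E) : ‖diagBlocks ψ‖ ≤ ‖ψ‖ := by
  refine (pow_le_pow_iff_left₀ (norm_nonneg _) (norm_nonneg _) two_ne_zero).mp ?_
  rw [PiLp.norm_sq_eq_of_L2, PiLp.norm_sq_eq_of_L2]
  gcongr with k
  exact PiLp.norm_apply_le (ψ k) k

theorem inner_toLp_update_zero [∀ i, InnerProductSpace ℝ (E i)] [DecidableEq ι]
    (u : PiLp 2 E) (i : ι) (g : E i) :
    ⟪u, WithLp.toLp 2 (Function.update (0 : PiLp 2 E) i g)⟫_ℝ = ⟪u i, g⟫_ℝ := by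
  rw [PiLp.inner_apply, Finset.sum_eq_single i (fun k _ hk => by simp [hk]) (by simp)]
  simp

end Blocks

section Game

variable {N : ℕ} {d : Fin N → ℕ}
  {J : ∀ _ : Fin N, (PiLp 2 fun i => EuclideanSpace ℝ (Fin (d i))) → ℝ}

local notation "𝕏" => PiLp 2 fun i => EuclideanSpace ℝ (Fin (d i))

local notation "𝕐" => PiLp 2 fun _ : Fin N => 𝕏

theorem inner_Amap (G : SimpleGraph (Fin N)) [DecidableRel G.Adj] (κ : ℝ) (φ ψ : 𝕐) :
    ⟪φ, Amap J G κ ψ⟫_ℝ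
      = ⟪diagBlocks φ, Ftil J ψ⟫_ℝ + κ * ∑ i, ∑ j, G.lapMatrix ℝ i j * ⟪φ i, ψ j⟫_ℝ := by
  simp only [PiLp.inner_apply φ, Amap, inner_add_right, inner_toLp_update_zero,
    real_inner_smul_right, inner_sum, Finset.sum_add_distrib, Finset.mul_sum]
  rfl

theorem le_inner_diagBlocks_Ftil {ε ι : ℝ}
    (hmono : ∀ x y : 𝕏, ⟪x - y, Fmap J x - Fmap J y⟫_ℝ ≥ ε * ‖x - y‖ ^ 2)
    (hFLip : ∀ x y : 𝕏, ‖Fmap J x - Fmap J y‖ ≤ ι * ‖x - y‖)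
    (hFtilLip : ∀ ψ φ : 𝕐, ‖Ftil J ψ - Ftil J φ‖ ≤ ι * ‖ψ - φ‖)
    {xstar : 𝕏} (hxstar : Fmap J xstar = 0) (s : 𝕏) (ψ : 𝕐) :
    ε * ‖s - xstar‖ ^ 2 - 2 * ι * ‖s - xstar‖ * ‖ψ - (WithLp.toLp 2 fun _ => s : 𝕐)‖
        - ι * ‖ψ - (WithLp.toLp 2 fun _ => s : 𝕐)‖ ^ 2
      ≤ ⟪diagBlocks fun i => ψ i - xstar, Ftil J ψ⟫_ℝ := by
  set a := ‖s - xstar‖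
  set b := ‖ψ - (WithLp.toLp 2 fun _ => s : 𝕐)‖
  set u : 𝕏 := diagBlocks fun i => ψ i - s
  set e : 𝕏 := Ftil J ψ - Fmap J s
  have hsplit : (diagBlocks fun i => ψ i - xstar) = (s - xstar) + u := by
    ext k : 1
    simp only [diagBlocks, u, PiLp.add_apply, PiLp.sub_apply]
    abel
  have hu : ‖u‖ ≤ b := by
    simpa only [u, WithLp.ofLp_sub, Pi.sub_def] using
      norm_diagBlocks_le (ψ - (WithLp.toLp 2 fun _ => s : 𝕐))
  have he : ‖e‖ ≤ ι * b := hFtilLip ψ (WithLp.toLp 2 fun _ => s)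
  have hF : ‖Fmap J s‖ ≤ ι * a := by simpa [hxstar] using hFLip s xstar
  have hmono_s : ε * a ^ 2 ≤ ⟪s - xstar, Fmap J s⟫_ℝ := by simpa [hxstar] using hmono s xstar
  have hsu : ‖(s - xstar) + u‖ ≤ a + b := (norm_add_le _ _).trans (by gcongr)
  have hcs_u : -(b * (ι * a)) ≤ ⟪u, Fmap J s⟫_ℝ :=
    (neg_le_neg (mul_le_mul hu hF (norm_nonneg _) ((norm_nonneg u).trans hu))).trans
      (neg_le_of_abs_le (abs_real_inner_le_norm _ _))
  have hcs_e : -((a + b) * (ι * b)) ≤ ⟪(s - xstar) + u, e⟫_ℝ :=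
    (neg_le_neg (mul_le_mul hsu he (norm_nonneg _) ((norm_nonneg _).trans hsu))).trans
      (neg_le_of_abs_le (abs_real_inner_le_norm _ _))
  have hF_eq : Ftil J ψ = e + Fmap J s := (sub_add_cancel _ _).symm
  rw [hsplit, hF_eq, inner_add_right, inner_add_left _ u (Fmap J s)]
  linarith

theorem gainRate_mul_norm_sq_le_inner_Amap (hN : 1 ≤ N) (G : SimpleGraph (Fin N))
    [DecidableRel G.Adj] {ε ι lam₂ κ : ℝ} (hε : 0 < ε) (hι : 0 < ι) (hlam₂ : 0 < lam₂)
    (hmono : ∀ x y : 𝕏, ⟪x - y, Fmap J x - Fmap J y⟫_ℝ ≥ ε * ‖x - y‖ ^ 2)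
    (hFLip : ∀ x y : 𝕏, ‖Fmap J x - Fmap J y‖ ≤ ι * ‖x - y‖)
    (hFtilLip : ∀ ψ φ : 𝕐, ‖Ftil J ψ - Ftil J φ‖ ≤ ι * ‖ψ - φ‖)
    (hlap : ∀ v : Fin N → 𝕏, ∑ i, v i = 0 →
      ∑ i, ∑ j, G.lapMatrix ℝ i j * ⟪v i, v j⟫_ℝ ≥ lam₂ * ∑ i, ‖v i‖ ^ 2)
    {xstar : 𝕏} (hxstar : Fmap J xstar = 0) (hκgain : κ > (ι ^ 2 / ε + ι) / lam₂) (ψ : 𝕐) :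
    gainRate ε ι lam₂ κ N * ‖ψ - (WithLp.toLp 2 fun _ => xstar : 𝕐)‖ ^ 2
      ≤ ⟪ψ - (WithLp.toLp 2 fun _ => xstar : 𝕐), Amap J G κ ψ⟫_ℝ := by
  have hc : ι ^ 2 < ε * (κ * lam₂ - ι) := sq_lt_mul_sub_of_gt_div hε hlam₂ hκgain
  have hκ : 0 ≤ κ :=
    (pos_of_mul_pos_left (by linarith [pos_of_sq_lt_mul hε hc]) hlam₂.le).le
  set m : 𝕏 := (N : ℝ)⁻¹ • ∑ j, (ψ j - xstar)
  set w : Fin N → 𝕏 := fun i => ψ i - xstar - m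
  have hw : ∑ i, w i = 0 := by
    simpa only [Fintype.card_fin] using sum_sub_average_eq_zero fun i => ψ i - xstar
  have hψw : ∀ i, ψ i - xstar = m + w i := fun i => (add_sub_cancel _ _).symm
  have hdiff : ⇑(ψ - (WithLp.toLp 2 fun _ => xstar : 𝕐)) = fun i => ψ i - xstar := rfl
  set a := ‖m‖
  set b := ‖(WithLp.toLp 2 w : 𝕐)‖
  have hb : b ^ 2 = ∑ i, ‖w i‖ ^ 2 := PiLp.norm_sq_eq_of_L2 _ _
  have hnorm : ‖ψ - (WithLp.toLp 2 fun _ => xstar : 𝕐)‖ ^ 2 = N * a ^ 2 + b ^ 2 := by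
    rw [PiLp.norm_sq_eq_of_L2, hdiff, hb]
    simpa only [hψw, Fintype.card_fin] using sum_norm_add_sq_of_sum_eq_zero m hw
  have hlapl : lam₂ * b ^ 2 ≤ ∑ i, ∑ j, G.lapMatrix ℝ i j * ⟪ψ i - xstar, ψ j⟫_ℝ := by
    have hψ : ∀ j, ψ j = (xstar + m) + w j := fun j => by rw [add_assoc, ← hψw, add_sub_cancel]
    simp_rw [hψw, hψ]
    rw [sum_sum_mul_inner_add_add G.sum_lapMatrix_row G.sum_lapMatrix_col, hb]
    exact hlap w hw
  have hw' : ψ - (WithLp.toLp 2 fun _ => xstar + m : 𝕐) = WithLp.toLp 2 w := by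
    ext1 i
    simp [w, sub_sub]
  have hgrad : ε * a ^ 2 - 2 * ι * a * b - ι * b ^ 2
      ≤ ⟪diagBlocks fun i => ψ i - xstar, Ftil J ψ⟫_ℝ := by
    simpa only [add_sub_cancel_left, hw'] using
      le_inner_diagBlocks_Ftil hmono hFLip hFtilLip hxstar (xstar + m) ψ
  have hquad := det_div_trace_mul_le_quadratic hε hc a b
  have hscale : gainRate ε ι lam₂ κ N * (N * a ^ 2 + b ^ 2)
      ≤ (ε * (κ * lam₂ - ι) - ι ^ 2) / (ε + (κ * lam₂ - ι)) * (a ^ 2 + b ^ 2) := by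
    have hμ := det_div_trace_pos hε hc
    have hN1 : (1 : ℝ) ≤ N := by exact_mod_cast hN
    rw [gainRate, div_mul_eq_mul_div, div_le_iff₀ (by positivity)]
    nlinarith [mul_le_mul_of_nonneg_left hN1 (mul_nonneg hμ.le (sq_nonneg b))]
  rw [hnorm, inner_Amap, hdiff]
  linarith [mul_le_mul_of_nonneg_left hlapl hκ]

end Game

theorem static_gain_exponential_convergence_general
    {N : ℕ} (hN : 1 ≤ N) {d : Fin N → ℕ}
    (J : ∀ _ : Fin N, (PiLp 2 fun i => EuclideanSpace ℝ (Fin (d i))) → ℝ)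
    (G : SimpleGraph (Fin N)) [DecidableRel G.Adj]
    (ε ι lam₂ κ : ℝ) (hε : 0 < ε) (hι : 0 < ι) (hlam₂ : 0 < lam₂)
    (hmono : ∀ x y : PiLp 2 fun i => EuclideanSpace ℝ (Fin (d i)),
      (inner ℝ (x - y) (Fmap J x - Fmap J y) : ℝ) ≥ ε * ‖x - y‖ ^ 2)
    (hFLip : ∀ x y : PiLp 2 fun i => EuclideanSpace ℝ (Fin (d i)),
      ‖Fmap J x - Fmap J y‖ ≤ ι * ‖x - y‖)
    (hFtilLip : ∀ ψ φ : PiLp 2 fun _ : Fin N => PiLp 2 fun i => EuclideanSpace ℝ (Fin (d i)),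
      ‖Ftil J ψ - Ftil J φ‖ ≤ ι * ‖ψ - φ‖)
    (hlap : ∀ v : Fin N → PiLp 2 fun i => EuclideanSpace ℝ (Fin (d i)),
      ∑ i, v i = 0 →
      ∑ i, ∑ j, SimpleGraph.lapMatrix ℝ G i j * (inner ℝ (v i) (v j) : ℝ) ≥ lam₂ * ∑ i, ‖v i‖ ^ 2)
    (xstar : PiLp 2 fun i => EuclideanSpace ℝ (Fin (d i))) (hxstar : Fmap J xstar = 0)
    (hκgain : κ > (ι ^ 2 / ε + ι) / lam₂)
    (x : ℝ → PiLp 2 fun _ : Fin N => PiLp 2 fun i => EuclideanSpace ℝ (Fin (d i)))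
    (hx : ∀ t : ℝ, 0 ≤ t → HasDerivAt x (-(Amap J G κ (x t))) t) :
    ∃ α : ℝ, 0 < α ∧ ∀ t : ℝ, 0 ≤ t →
      ‖x t - (show PiLp 2 (fun _ : Fin N => PiLp 2 fun i => EuclideanSpace ℝ (Fin (d i))) from WithLp.toLp 2 fun _ => xstar)‖ ≤ Real.exp (-α * t) * ‖x 0 - (show PiLp 2 (fun _ : Fin N => PiLp 2 fun i => EuclideanSpace ℝ (Fin (d i))) from WithLp.toLp 2 fun _ => xstar)‖ :=
  ⟨gainRate ε ι lam₂ κ N, gainRate_pos hN hε hlam₂ hκgain, fun _ ht =>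
    norm_sub_le_exp_mul_of_hasDerivAt_neg
      (gainRate_mul_norm_sq_le_inner_Amap hN G hε hι hlam₂ hmono hFLip hFtilLip hlap hxstar hκgain)
      hx ht⟩

/-- **Corollary 1**: the static-gain distributed algorithm drives all players' estimates
exponentially to the consensus point at the Nash equilibrium. -/
theorem static_gain_exponential_convergence
    {N : ℕ} (hN : 1 ≤ N) {d : Fin N → ℕ}
    (J : ∀ _ : Fin N, (PiLp 2 fun i => EuclideanSpace ℝ (Fin (d i))) → ℝ)
    (hJ : ∀ i, Differentiable ℝ (J i))
    (G : SimpleGraph (Fin N)) [DecidableRel G.Adj] (hG : G.Connected)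
    (ε ι lam₂ κ : ℝ) (hε : 0 < ε) (hι : 0 < ι) (hlam₂ : 0 < lam₂)
    (hmono : ∀ x y : PiLp 2 fun i => EuclideanSpace ℝ (Fin (d i)),
      (inner ℝ (x - y) (Fmap J x - Fmap J y) : ℝ) ≥ ε * ‖x - y‖ ^ 2)
    (hFLip : ∀ x y : PiLp 2 fun i => EuclideanSpace ℝ (Fin (d i)),
      ‖Fmap J x - Fmap J y‖ ≤ ι * ‖x - y‖)
    (hFtilLip : ∀ ψ φ : PiLp 2 fun _ : Fin N => PiLp 2 fun i => EuclideanSpace ℝ (Fin (d i)),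
      ‖Ftil J ψ - Ftil J φ‖ ≤ ι * ‖ψ - φ‖)
    (hlap : ∀ v : Fin N → PiLp 2 fun i => EuclideanSpace ℝ (Fin (d i)),
      ∑ i, v i = 0 →
      ∑ i, ∑ j, SimpleGraph.lapMatrix ℝ G i j * (inner ℝ (v i) (v j) : ℝ) ≥ lam₂ * ∑ i, ‖v i‖ ^ 2)
    (xstar : PiLp 2 fun i => EuclideanSpace ℝ (Fin (d i))) (hxstar : Fmap J xstar = 0)
    (hκgain : κ > (ι ^ 2 / ε + ι) / lam₂)
    (x : ℝ → PiLp 2 fun _ : Fin N => PiLp 2 fun i => EuclideanSpace ℝ (Fin (d i)))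
    (hx : ∀ t : ℝ, 0 ≤ t → HasDerivAt x (-(Amap J G κ (x t))) t) :
    ∃ α : ℝ, 0 < α ∧ ∀ t : ℝ, 0 ≤ t →
      ‖x t - (show PiLp 2 (fun _ : Fin N => PiLp 2 fun i => EuclideanSpace ℝ (Fin (d i))) from WithLp.toLp 2 fun _ => xstar)‖ ≤ Real.exp (-α * t) * ‖x 0 - (show PiLp 2 (fun _ : Fin N => PiLp 2 fun i => EuclideanSpace ℝ (Fin (d i))) from WithLp.toLp 2 fun _ => xstar)‖ :=
  static_gain_exponential_convergence_general hN J G ε ι lam₂ κ hε hι hlam₂ hmono hFLip hFtilLip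
    hlap xstar hxstar hκgain x hx
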